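/- Let X be a random variable with E[X] = μ and Var(X) = σ², and λ > 0. Let ψ be Catoni's influence function (ψ(x) = log(1+x+x²/2) for x ≥ 0, -log(1-x+x²/2) for x < 0) and Y = ψ(λ(X - μ)). Then |E[Y]| ≤ λ²σ²/2. -/

import Mathlib

/-
Since `(1 + x + x²/2)(1 - x + x²/2) = 1 + x⁴/4 ≥ 1`, the two logarithms in the definition of `ψ`
have nonnegative sum, and `log t ≤ t - 1` then gives `x - x²/2 ≤ ψ x ≤ x + x²/2` on both branches.
Integrating against the law of `Y = λ(X - μ)`, whose mean is `0` and second moment `λ²σ²`,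
gives the bound.
-/

open MeasureTheory ProbabilityTheory

noncomputable def catoniPsi (x : ℝ) : ℝ :=
  if 0 ≤ x then Real.log (1 + x + x ^ 2 / 2) else -Real.log (1 - x + x ^ 2 / 2)

lemma log_add_log_catoni_quadratics_nonneg (x : ℝ) :
    0 ≤ Real.log (1 + x + x ^ 2 / 2) + Real.log (1 - x + x ^ 2 / 2) := by
  rw [← Real.log_mul (by nlinarith [sq_nonneg (x + 1)]) (by nlinarith [sq_nonneg (x - 1)])]
  exact Real.log_nonneg (by nlinarith [sq_nonneg (x ^ 2)])

lemma catoniPsi_le (x : ℝ) : catoniPsi x ≤ x + x ^ 2 / 2 := by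
  have hsum := log_add_log_catoni_quadratics_nonneg x
  have hlog := Real.log_le_sub_one_of_pos (show 0 < 1 + x + x ^ 2 / 2 by
    nlinarith [sq_nonneg (x + 1)])
  unfold catoniPsi
  split_ifs <;> linarith

lemma le_catoniPsi (x : ℝ) : x - x ^ 2 / 2 ≤ catoniPsi x := by
  have hsum := log_add_log_catoni_quadratics_nonneg x
  have hlog := Real.log_le_sub_one_of_pos (show 0 < 1 - x + x ^ 2 / 2 by
    nlinarith [sq_nonneg (x - 1)])
  unfold catoniPsi
  split_ifs <;> linarith

lemma abs_catoniPsi_sub_le (x : ℝ) : |catoniPsi x - x| ≤ x ^ 2 / 2 :=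
  abs_sub_le_iff.2 ⟨by linarith [catoniPsi_le x], by linarith [le_catoniPsi x]⟩

lemma measurable_catoniPsi : Measurable catoniPsi := by
  unfold catoniPsi
  refine Measurable.ite (measurableSet_le measurable_const measurable_id) ?_ ?_ <;> fun_prop

lemma abs_integral_comp_sub_integral_le {Ω : Type*} [MeasurableSpace Ω] {P : Measure Ω}
    {f : ℝ → ℝ} (hf : Measurable f) (hf_near_id : ∀ x, |f x - x| ≤ x ^ 2 / 2) {Y : Ω → ℝ}
    (hY : Integrable Y P) (hY_sq : Integrable (fun ω => Y ω ^ 2) P) :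
    |∫ ω, f (Y ω) ∂P - ∫ ω, Y ω ∂P| ≤ (∫ ω, Y ω ^ 2 ∂P) / 2 := by
  have hdiff : Integrable (fun ω => f (Y ω) - Y ω) P :=
    (hY_sq.div_const 2).mono'
      ((hf.comp_aemeasurable hY.aemeasurable).aestronglyMeasurable.sub hY.aestronglyMeasurable)
      (.of_forall fun ω => hf_near_id (Y ω))
  have hfY : Integrable (fun ω => f (Y ω)) P :=
    (hdiff.add hY).congr (.of_forall fun ω => sub_add_cancel (f (Y ω)) (Y ω))
  rw [← integral_sub hfY hY, ← integral_div]
  exact norm_integral_le_of_norm_le (hY_sq.div_const 2)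
    (.of_forall fun ω => (Real.norm_eq_abs _).trans_le (hf_near_id (Y ω)))

theorem catoni_mean_bound_general {Ω : Type*} [MeasurableSpace Ω] (P : Measure Ω)
    [IsProbabilityMeasure P]
    (X : Ω → ℝ) (μ σ l : ℝ)
    (hX : MeasureTheory.MemLp X 2 P)
    (hmean : ∫ ω, X ω ∂P = μ)
    (hvar : ProbabilityTheory.variance X P = σ ^ 2) :
    |∫ ω, catoniPsi (l * (X ω - μ)) ∂P| ≤ l ^ 2 * σ ^ 2 / 2 := by
  have hY : MemLp (fun ω => l * (X ω - μ)) 2 P := (hX.sub (memLp_const μ)).const_mul l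
  have hY_mean : ∫ ω, l * (X ω - μ) ∂P = 0 := by
    rw [integral_const_mul, integral_sub (hX.integrable one_le_two) (integrable_const μ), hmean]
    simp
  have hY_sq_mean : ∫ ω, (l * (X ω - μ)) ^ 2 ∂P = l ^ 2 * σ ^ 2 := by
    simp only [mul_pow]
    rw [integral_const_mul, ← hvar, variance_eq_integral hX.aemeasurable, hmean]
  simpa only [hY_mean, sub_zero, hY_sq_mean] using
    abs_integral_comp_sub_integral_le measurable_catoniPsi abs_catoniPsi_sub_le
      (hY.integrable one_le_two) hY.integrable_sq

theorem catoni_mean_bound {Ω : Type*} [MeasurableSpace Ω] (P : Measure Ω)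
    [IsProbabilityMeasure P]
    (X : Ω → ℝ) (μ σ l : ℝ) (hl : 0 < l)
    (hX : MeasureTheory.MemLp X 2 P)
    (hmean : ∫ ω, X ω ∂P = μ)
    (hvar : ProbabilityTheory.variance X P = σ ^ 2) :
    |∫ ω, catoniPsi (l * (X ω - μ)) ∂P| ≤ l ^ 2 * σ ^ 2 / 2 :=
  catoni_mean_bound_general P X μ σ l hX hmean hvar
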